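/- (Theorem 2, noisy recovery.) Fix positive integers m₁, m₂, s₁, s₂. Let L, I₀, K₀, N be finitely supported functions ℤ×ℤ → ℝ with I₀ ≠ 0, K₀ in the simplex S and supported in the m₁×m₂ grid, and set B = I₀⊗K₀ + N with ‖L⊗N‖_F ≤ ε for some ε ≥ 0. Let (κ_i)_{i=1,…,s₁s₂} be an orthonormal basis of the space of functions supported in the s₁×s₂ grid, set σ_i = ‖(L⊗B)⊗κ_i‖_F, assume σ_i > 0 for all i, and let σ_max = max_i σ_i and σ_min = min_i σ_i. Suppose τ > 0 satisfies ‖(L⊗I₀)⊗X‖_F ≥ τ·‖X‖_F for every X supported in the (m₁+s₁−1)×(m₂+s₂−1) grid. Define h(K) = ∑_{i=1}^{s₁s₂} ‖K⊗κ_i‖_F²/σ_i², and let K̂ be any function in the simplex S supported in the m₁×m₂ grid satisfying h(K̂) ≤ h(K) for every K in S supported in the m₁×m₂ grid. Then ‖K₀ − K̂‖_F ≤ √2·(σ_max + (σ_max/σ_min)·√(s₁s₂)·ε) / τ. -/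

import Mathlib

/-- Images, kernels, and filters: finitely supported functions `ℤ × ℤ → ℝ`. -/
abbrev Img := (ℤ × ℤ) →₀ ℝ

/-- Discrete 2D convolution: `(X ⊗ Y)(i,j) = ∑_{(u,v)} X((i,j)-(u,v)) * Y(u,v)`. -/
noncomputable def conv (X Y : Img) : Img :=
  X.sum fun a xa => Y.sum fun b yb => Finsupp.single (a + b) (xa * yb)

/-- Frobenius norm `‖X‖_F = √(∑ X(i,j)²)`. -/
noncomputable def frob (X : Img) : ℝ := Real.sqrt (X.sum fun _ c => c ^ 2)

/-- Inner product `⟨X, Y⟩ = ∑ X(i,j) * Y(i,j)`. -/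
noncomputable def inner2 (X Y : Img) : ℝ := X.sum fun p c => c * Y p

/-- ℓ¹ norm `‖X‖₁ = ∑ |X(i,j)|`. -/
noncomputable def l1 (X : Img) : ℝ := X.sum fun _ c => |c|

/-- The simplex `S` of blur kernels: nonnegative entries summing to one. -/
def InSimplex (K : Img) : Prop := (∀ p, 0 ≤ K p) ∧ (K.sum fun _ c => c) = 1

/-- `X` is supported in the `a × b` grid `{0,…,a-1} × {0,…,b-1}`. -/
def SuppIn (a b : ℕ) (X : Img) : Prop :=
  ∀ p : ℤ × ℤ, ¬(0 ≤ p.1 ∧ p.1 < (a : ℤ) ∧ 0 ≤ p.2 ∧ p.2 < (b : ℤ)) → X p = 0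

/-! Since the `κ i` form an orthonormal basis of the `s₁ × s₂` patch space, the filter energies
satisfy the Parseval identity `∑ i, ‖X ⊗ κ i‖² = s₁ s₂ ‖X‖²`. Sharpness of `L ⊗ I₀` gives, filter
by filter,
`τ ‖K₀ ⊗ κ i‖ ≤ ‖(L ⊗ I₀) ⊗ (K₀ ⊗ κ i)‖ = ‖(L ⊗ B) ⊗ κ i - (L ⊗ N) ⊗ κ i‖ ≤ σ i + ‖(L ⊗ N) ⊗ κ i‖`,
and Minkowski's inequality with Parseval for `L ⊗ N` turns this into `τ ‖K₀‖ ≤ σmax + ε`.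
The same estimate divided by `σ i`, together with the minimality `h K̂ ≤ h K₀`, gives
`τ ‖K̂‖ ≤ σmax (1 + ε / σmin)`. Finally `K₀` and `K̂` are entrywise nonnegative, so
`‖K₀ - K̂‖² ≤ ‖K₀‖² + ‖K̂‖²`. -/

open Pointwise

lemma conv_eq_coeff_mul (X Y : Img) :
    conv X Y = (AddMonoidAlgebra.ofCoeff X * AddMonoidAlgebra.ofCoeff Y).coeff := by
  rw [AddMonoidAlgebra.mul_def]
  simp [conv, AddMonoidAlgebra.single, AddMonoidAlgebra.coeff_finsuppSum]

lemma ofCoeff_conv (X Y : Img) :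
    AddMonoidAlgebra.ofCoeff (conv X Y) =
      AddMonoidAlgebra.ofCoeff X * AddMonoidAlgebra.ofCoeff Y := by
  rw [conv_eq_coeff_mul, AddMonoidAlgebra.ofCoeff_coeff]

lemma conv_add_noise_sub (L I K N k : Img) :
    conv (conv L I) (conv K k) = conv (conv L (conv I K + N)) k - conv (conv L N) k := by
  apply AddMonoidAlgebra.ofCoeff_injective
  simp only [ofCoeff_conv, AddMonoidAlgebra.ofCoeff_add, AddMonoidAlgebra.ofCoeff_sub]
  ring

lemma support_conv_subset (X Y : Img) : (conv X Y).support ⊆ X.support + Y.support := by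
  rw [conv_eq_coeff_mul]
  exact AddMonoidAlgebra.support_coeff_mul_subset _ _

lemma conv_apply_eq_sum (X K : Img) {s : Finset (ℤ × ℤ)} (hK : K.support ⊆ s) (p : ℤ × ℤ) :
    conv X K p = ∑ u ∈ s, X (p - u) * K u := by
  have hsingle : ∀ u, (∑ a ∈ X.support, if a + u = p then X a * K u else 0) = X (p - u) * K u := by
    intro u
    simp_rw [← eq_sub_iff_add_eq, Finset.sum_ite_eq']
    split_ifs with hm
    · rfl
    · rw [Finsupp.notMem_support_iff.mp hm, zero_mul]
  rw [conv_eq_coeff_mul, AddMonoidAlgebra.coeff_mul]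
  change ∑ a ∈ X.support, ∑ u ∈ K.support, _ = _
  rw [Finset.sum_comm]
  simp_rw [hsingle]
  exact Finset.sum_subset hK fun u _ hu => by rw [Finsupp.notMem_support_iff.mp hu, mul_zero]

lemma sqrt_sum_sq_add_le {ι : Type*} (s : Finset ι) (f g : ι → ℝ) :
    √(∑ i ∈ s, (f i + g i) ^ 2) ≤ √(∑ i ∈ s, f i ^ 2) + √(∑ i ∈ s, g i ^ 2) := by
  have h := norm_add_le (WithLp.toLp 2 fun i : s => f i : EuclideanSpace ℝ s)
    (WithLp.toLp 2 fun i : s => g i)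
  simpa only [← WithLp.toLp_add, EuclideanSpace.norm_eq, Real.norm_eq_abs, sq_abs,
    Pi.add_apply, Finset.sum_coe_sort s (fun i => (f i + g i) ^ 2),
    Finset.sum_coe_sort s (fun i => f i ^ 2), Finset.sum_coe_sort s (fun i => g i ^ 2)] using h

lemma sqrt_sum_sq_le_sqrt_sum_sq {ι : Type*} {s : Finset ι} {f g : ι → ℝ}
    (hf : ∀ i ∈ s, 0 ≤ f i) (hfg : ∀ i ∈ s, f i ≤ g i) :
    √(∑ i ∈ s, f i ^ 2) ≤ √(∑ i ∈ s, g i ^ 2) :=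
  Real.sqrt_le_sqrt <| Finset.sum_le_sum fun i hi => pow_le_pow_left₀ (hf i hi) (hfg i hi) 2

lemma sqrt_sum_sq_mul_left {ι : Type*} (s : Finset ι) (f : ι → ℝ) {c : ℝ} (hc : 0 ≤ c) :
    √(∑ i ∈ s, (c * f i) ^ 2) = c * √(∑ i ∈ s, f i ^ 2) := by
  simp_rw [mul_pow, ← Finset.mul_sum]
  rw [Real.sqrt_mul (sq_nonneg c), Real.sqrt_sq hc]

lemma sqrt_sum_sq_le_sqrt_card_mul {ι : Type*} [Fintype ι] {f : ι → ℝ} {c : ℝ}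
    (hf : ∀ i, 0 ≤ f i) (hfc : ∀ i, f i ≤ c) :
    √(∑ i, f i ^ 2) ≤ √(Fintype.card ι : ℝ) * c := by
  rcases isEmpty_or_nonempty ι with hι | ⟨⟨i⟩⟩
  · simp
  · have hc : 0 ≤ c := (hf i).trans (hfc i)
    calc √(∑ i, f i ^ 2) ≤ √(∑ _i : ι, c ^ 2) :=
          sqrt_sum_sq_le_sqrt_sum_sq (fun i _ => hf i) fun i _ => hfc i
      _ = √(Fintype.card ι : ℝ) * c := by
          rw [Finset.sum_const, Finset.card_univ, nsmul_eq_mul,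
            Real.sqrt_mul (Nat.cast_nonneg _), Real.sqrt_sq hc]

lemma frob_nonneg (X : Img) : 0 ≤ frob X := Real.sqrt_nonneg _

lemma frob_eq_sqrt_sum (X : Img) {s : Finset (ℤ × ℤ)} (h : X.support ⊆ s) :
    frob X = √(∑ p ∈ s, X p ^ 2) := by
  rw [frob, Finsupp.sum, Finset.sum_subset h fun p _ hp => by
    rw [Finsupp.notMem_support_iff.mp hp, zero_pow two_ne_zero]]

lemma frob_sq_eq_sum (X : Img) {s : Finset (ℤ × ℤ)} (h : X.support ⊆ s) :
    frob X ^ 2 = ∑ p ∈ s, X p ^ 2 := by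
  rw [frob_eq_sqrt_sum X h, Real.sq_sqrt (Finset.sum_nonneg fun _ _ => sq_nonneg _)]

lemma frob_sub_le (X Y : Img) : frob (X - Y) ≤ frob X + frob Y := by
  have hX : X.support ⊆ X.support ∪ Y.support := Finset.subset_union_left
  have hY : Y.support ⊆ X.support ∪ Y.support := Finset.subset_union_right
  rw [frob_eq_sqrt_sum _ Finsupp.support_sub, frob_eq_sqrt_sum X hX,
    frob_eq_sqrt_sum Y hY]
  simpa [sub_eq_add_neg] using sqrt_sum_sq_add_le (X.support ∪ Y.support) X (-Y)

lemma frob_sub_sq_le {X Y : Img} (hX : ∀ p, 0 ≤ X p) (hY : ∀ p, 0 ≤ Y p) :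
    frob (X - Y) ^ 2 ≤ frob X ^ 2 + frob Y ^ 2 := by
  rw [frob_sq_eq_sum _ Finsupp.support_sub, frob_sq_eq_sum X Finset.subset_union_left,
    frob_sq_eq_sum Y Finset.subset_union_right, ← Finset.sum_add_distrib]
  refine Finset.sum_le_sum fun p _ => ?_
  rw [Finsupp.sub_apply]
  nlinarith [mul_nonneg (hX p) (hY p)]

lemma mul_frob_conv_le_of_sharp {τ : ℝ} {L I K N k : Img}
    (h : τ * frob (conv K k) ≤ frob (conv (conv L I) (conv K k))) :
    τ * frob (conv K k) ≤ frob (conv (conv L (conv I K + N)) k) + frob (conv (conv L N) k) :=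
  h.trans (conv_add_noise_sub L I K N k ▸ frob_sub_le _ _)

lemma inner2_eq_sum (X Y : Img) {s : Finset (ℤ × ℤ)} (h : X.support ⊆ s) :
    inner2 X Y = ∑ p ∈ s, X p * Y p := by
  rw [inner2, Finsupp.sum]
  exact Finset.sum_subset h fun p _ hp => by rw [Finsupp.notMem_support_iff.mp hp, zero_mul]

lemma sum_sq_comp_sub_eq_frob_sq (X : Img) (u : ℤ × ℤ) {s : Finset (ℤ × ℤ)}
    (h : ∀ q ∈ X.support, q + u ∈ s) : ∑ p ∈ s, X (p - u) ^ 2 = frob X ^ 2 := by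
  rw [frob_sq_eq_sum X (s := s.map (Equiv.subRight u).toEmbedding), Finset.sum_map]
  · rfl
  · intro q hq
    simpa [Finset.mem_map_equiv] using h q hq

theorem sum_frob_conv_sq {ι : Type*} [Fintype ι] [DecidableEq ι] {G : Finset (ℤ × ℤ)}
    {κ : ι → Img} (hκ : ∀ i, (κ i).support ⊆ G)
    (hortho : ∀ i j, inner2 (κ i) (κ j) = if i = j then 1 else 0)
    (hcard : Fintype.card ι = G.card) (X : Img) :
    ∑ i, frob (conv X (κ i)) ^ 2 = G.card * frob X ^ 2 := by
  let v (i : ι) : EuclideanSpace ℝ G := WithLp.toLp 2 fun u => κ i u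
  have hv : Orthonormal ℝ v := by
    refine orthonormal_iff_ite.mpr fun i j => ?_
    rw [← hortho, inner2_eq_sum _ _ (hκ i), ← Finset.sum_coe_sort G]
    simp [v, EuclideanSpace.inner_toLp_toLp, dotProduct, mul_comm]
  let b := OrthonormalBasis.mk hv
    (hv.linearIndependent.span_eq_top_of_card_eq_finrank' (by simp [hcard])).ge
  let w (p : ℤ × ℤ) : EuclideanSpace ℝ G := WithLp.toLp 2 fun u => X (p - u)
  have hconv : ∀ i p, conv X (κ i) p = inner ℝ (b i) (w p) := by
    intro i p
    rw [conv_apply_eq_sum X (κ i) (hκ i), OrthonormalBasis.coe_mk, ← Finset.sum_coe_sort G]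
    simp [v, w, EuclideanSpace.inner_toLp_toLp, dotProduct]
  have hw : ∀ p, ∑ i, inner ℝ (b i) (w p) ^ 2 = ∑ u ∈ G, X (p - u) ^ 2 := by
    intro p
    rw [b.sum_sq_inner_right, EuclideanSpace.real_norm_sq_eq, ← Finset.sum_coe_sort G]
  set P := X.support + G
  have hP : ∀ i, (conv X (κ i)).support ⊆ P := fun i =>
    (support_conv_subset X (κ i)).trans (Finset.add_subset_add_left (hκ i))
  calc ∑ i, frob (conv X (κ i)) ^ 2
      = ∑ p ∈ P, ∑ u ∈ G, X (p - u) ^ 2 := by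
        simp_rw [frob_sq_eq_sum _ (hP _), hconv]
        rw [Finset.sum_comm]
        exact Finset.sum_congr rfl fun p _ => hw p
    _ = ∑ u ∈ G, frob X ^ 2 := by
        rw [Finset.sum_comm]
        exact Finset.sum_congr rfl fun u hu =>
          sum_sq_comp_sub_eq_frob_sq X u fun q hq => Finset.add_mem_add hq hu
    _ = G.card * frob X ^ 2 := by rw [Finset.sum_const, nsmul_eq_mul]

noncomputable def grid (a b : ℕ) : Finset (ℤ × ℤ) := Finset.Ico 0 (a : ℤ) ×ˢ Finset.Ico 0 (b : ℤ)

lemma card_grid (a b : ℕ) : (grid a b).card = a * b := by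
  simp [grid, Finset.card_product]

lemma SuppIn.support_subset {a b : ℕ} {X : Img} (h : SuppIn a b X) : X.support ⊆ grid a b := by
  intro p hp
  by_contra hp'
  exact Finsupp.mem_support_iff.mp hp (h p (by simpa [grid, and_assoc] using hp'))

lemma SuppIn.conv {m₁ m₂ a b : ℕ} {X Y : Img} (hX : SuppIn m₁ m₂ X) (hY : SuppIn a b Y) :
    SuppIn (m₁ + a - 1) (m₂ + b - 1) (conv X Y) := by
  intro p hp
  by_contra hne
  obtain ⟨q, hq, r, hr, rfl⟩ :=
    Finset.mem_add.mp (support_conv_subset X Y (Finsupp.mem_support_iff.mpr hne))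
  have hq' := hX.support_subset hq
  have hr' := hY.support_subset hr
  simp only [grid, Finset.mem_product, Finset.mem_Ico] at hq' hr'
  simp only [Prod.fst_add, Prod.snd_add] at hp
  omega

theorem sqrt_sum_frob_conv_sq_of_suppIn {s₁ s₂ : ℕ} {κ : Fin (s₁ * s₂) → Img}
    (hκ : ∀ i, SuppIn s₁ s₂ (κ i))
    (hortho : ∀ i j, inner2 (κ i) (κ j) = if i = j then 1 else 0) (X : Img) :
    √(∑ i, frob (conv X (κ i)) ^ 2) = √(Fintype.card (Fin (s₁ * s₂)) : ℝ) * frob X := by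
  rw [sum_frob_conv_sq (fun i => (hκ i).support_subset) hortho (by simp [card_grid]),
    card_grid, Real.sqrt_mul (by positivity), Real.sqrt_sq (frob_nonneg X), Fintype.card_fin]

section Stability

variable {ι : Type*} [Fintype ι]

theorem mul_sqrt_sum_sq_le_of_le_add {a σ e : ι → ℝ} {τ c E : ℝ} (hτ : 0 ≤ τ)
    (ha : ∀ i, 0 ≤ a i) (hσ : ∀ i, 0 ≤ σ i) (hσc : ∀ i, σ i ≤ c)
    (he : √(∑ i, e i ^ 2) ≤ √(Fintype.card ι : ℝ) * E) (h : ∀ i, τ * a i ≤ σ i + e i) :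
    τ * √(∑ i, a i ^ 2) ≤ √(Fintype.card ι : ℝ) * (c + E) :=
  calc τ * √(∑ i, a i ^ 2) = √(∑ i, (τ * a i) ^ 2) := (sqrt_sum_sq_mul_left _ _ hτ).symm
    _ ≤ √(∑ i, (σ i + e i) ^ 2) :=
        sqrt_sum_sq_le_sqrt_sum_sq (fun i _ => mul_nonneg hτ (ha i)) fun i _ => h i
    _ ≤ √(∑ i, σ i ^ 2) + √(∑ i, e i ^ 2) := sqrt_sum_sq_add_le _ _ _
    _ ≤ √(Fintype.card ι : ℝ) * c + √(Fintype.card ι : ℝ) * E :=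
        add_le_add (sqrt_sum_sq_le_sqrt_card_mul hσ hσc) he
    _ = √(Fintype.card ι : ℝ) * (c + E) := (mul_add _ _ _).symm

theorem mul_sqrt_sum_sq_le_of_weighted_le {a b σ e : ι → ℝ} {τ σmin σmax E : ℝ} (hτ : 0 ≤ τ)
    (ha : ∀ i, 0 ≤ a i) (hb : ∀ i, 0 ≤ b i) (hσmin : 0 < σmin) (hσmax : 0 ≤ σmax)
    (hσ : ∀ i, σmin ≤ σ i) (hσ' : ∀ i, σ i ≤ σmax)
    (he₀ : ∀ i, 0 ≤ e i) (he : √(∑ i, e i ^ 2) ≤ √(Fintype.card ι : ℝ) * E)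
    (h : ∀ i, τ * a i ≤ σ i + e i) (hmin : ∑ i, b i ^ 2 / σ i ^ 2 ≤ ∑ i, a i ^ 2 / σ i ^ 2) :
    τ * √(∑ i, b i ^ 2) ≤ √(Fintype.card ι : ℝ) * (σmax + σmax / σmin * E) := by
  have hσpos : ∀ i, 0 < σ i := fun i => hσmin.trans_le (hσ i)
  have hscaled : τ * √(∑ i, (a i / σ i) ^ 2) ≤ √(Fintype.card ι : ℝ) * (1 + E / σmin) := by
    refine mul_sqrt_sum_sq_le_of_le_add hτ (fun i => div_nonneg (ha i) (hσpos i).le)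
      (fun _ => zero_le_one) (fun _ => le_rfl) (e := fun i => e i / σmin) ?_ fun i => ?_
    · rw [← mul_div_assoc, le_div_iff₀ hσmin]
      simpa only [div_pow, ← Finset.sum_div, Real.sqrt_div' _ (sq_nonneg σmin),
        Real.sqrt_sq hσmin.le, div_mul_cancel₀ _ hσmin.ne'] using he
    · have he_le : e i ≤ e i / σmin * σ i := by
        rw [div_mul_eq_mul_div, le_div_iff₀ hσmin]
        exact mul_le_mul_of_nonneg_left (hσ i) (he₀ i)
      rw [mul_div_assoc', div_le_iff₀ (hσpos i), add_mul, one_mul]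
      linarith [h i]
  have hb_le : √(∑ i, b i ^ 2) ≤ σmax * √(∑ i, (a i / σ i) ^ 2) :=
    calc √(∑ i, b i ^ 2) ≤ √(∑ i, (σmax * (b i / σ i)) ^ 2) := by
          refine sqrt_sum_sq_le_sqrt_sum_sq (fun i _ => hb i) fun i _ => ?_
          calc b i = σ i * (b i / σ i) := (mul_div_cancel₀ _ (hσpos i).ne').symm
            _ ≤ σmax * (b i / σ i) :=
                mul_le_mul_of_nonneg_right (hσ' i) (div_nonneg (hb i) (hσpos i).le)
      _ = σmax * √(∑ i, (b i / σ i) ^ 2) := sqrt_sum_sq_mul_left _ _ hσmax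
      _ ≤ σmax * √(∑ i, (a i / σ i) ^ 2) := by
          refine mul_le_mul_of_nonneg_left (Real.sqrt_le_sqrt ?_) hσmax
          simpa only [div_pow] using hmin
  calc τ * √(∑ i, b i ^ 2) ≤ σmax * (τ * √(∑ i, (a i / σ i) ^ 2)) := by
        rw [mul_left_comm]; exact mul_le_mul_of_nonneg_left hb_le hτ
    _ ≤ σmax * (√(Fintype.card ι : ℝ) * (1 + E / σmin)) := mul_le_mul_of_nonneg_left hscaled hσmax
    _ = √(Fintype.card ι : ℝ) * (σmax + σmax / σmin * E) := by ring

end Stability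

lemma le_sqrt_two_mul_div {x y z C τ : ℝ} (hτ : 0 < τ) (hy : 0 ≤ y) (hz : 0 ≤ z)
    (hx : x ^ 2 ≤ y ^ 2 + z ^ 2) (hyC : τ * y ≤ C) (hzC : τ * z ≤ C) :
    x ≤ √2 * C / τ := by
  have hC : 0 ≤ C := (mul_nonneg hτ.le hy).trans hyC
  rw [le_div_iff₀ hτ]
  refine (abs_le_of_sq_le_sq' ?_ (by positivity)).2
  have hy2 : (τ * y) ^ 2 ≤ C ^ 2 := pow_le_pow_left₀ (by positivity) hyC 2
  have hz2 : (τ * z) ^ 2 ≤ C ^ 2 := pow_le_pow_left₀ (by positivity) hzC 2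
  rw [mul_pow, mul_pow, Real.sq_sqrt zero_le_two]
  nlinarith [mul_le_mul_of_nonneg_right hx (sq_nonneg τ)]

theorem recovery_noisy_general (m₁ m₂ s₁ s₂ : ℕ)
    (L I₀ K₀ N B : Img)
    (hK₀ : InSimplex K₀) (hK₀supp : SuppIn m₁ m₂ K₀)
    (hB : B = conv I₀ K₀ + N)
    (ε : ℝ) (hN : frob (conv L N) ≤ ε)
    (κ : Fin (s₁ * s₂) → Img) (hκsupp : ∀ i, SuppIn s₁ s₂ (κ i))
    (hortho : ∀ i j, inner2 (κ i) (κ j) = if i = j then 1 else 0)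
    (σ : Fin (s₁ * s₂) → ℝ) (hσ : ∀ i, σ i = frob (conv (conv L B) (κ i)))
    (hσpos : ∀ i, 0 < σ i)
    (σmax : ℝ) (hσmax : IsGreatest (Set.range σ) σmax)
    (σmin : ℝ) (hσmin : IsLeast (Set.range σ) σmin)
    (τ : ℝ) (hτ : 0 < τ)
    (hsharp : ∀ X : Img, SuppIn (m₁ + s₁ - 1) (m₂ + s₂ - 1) X →
      τ * frob X ≤ frob (conv (conv L I₀) X))
    (Khat : Img) (hKhat : InSimplex Khat)
    (hmin : ∀ K : Img, InSimplex K → SuppIn m₁ m₂ K →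
      ∑ i, frob (conv Khat (κ i)) ^ 2 / (σ i) ^ 2 ≤
        ∑ i, frob (conv K (κ i)) ^ 2 / (σ i) ^ 2) :
    frob (K₀ - Khat) ≤
      Real.sqrt 2 * (σmax + (σmax / σmin) * Real.sqrt ((s₁ : ℝ) * (s₂ : ℝ)) * ε) / τ := by
  obtain ⟨i₀, rfl⟩ := hσmax.1
  obtain ⟨i₁, rfl⟩ := hσmin.1
  have hσle (i) : σ i ≤ σ i₀ := hσmax.2 ⟨i, rfl⟩
  have hσge (i) : σ i₁ ≤ σ i := hσmin.2 ⟨i, rfl⟩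
  have hε : 0 ≤ ε := (frob_nonneg _).trans hN
  have hparseval := sqrt_sum_frob_conv_sq_of_suppIn hκsupp hortho
  have hcard : (1 : ℝ) ≤ √(Fintype.card (Fin (s₁ * s₂)) : ℝ) :=
    Real.one_le_sqrt.mpr (by exact_mod_cast Fintype.card_pos_iff.mpr ⟨i₀⟩)
  have hnoise : √(∑ i, frob (conv (conv L N) (κ i)) ^ 2)
      ≤ √(Fintype.card (Fin (s₁ * s₂)) : ℝ) * ε := by
    rw [hparseval]; exact mul_le_mul_of_nonneg_left hN (by positivity)
  have hfilter (i) : τ * frob (conv K₀ (κ i)) ≤ σ i + frob (conv (conv L N) (κ i)) := by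
    rw [hσ i, hB]
    exact mul_frob_conv_le_of_sharp (hsharp _ (hK₀supp.conv (hκsupp i)))
  have htrue : τ * frob K₀ ≤ σ i₀ + ε := by
    have hsum := mul_sqrt_sum_sq_le_of_le_add hτ.le (fun i => frob_nonneg _)
      (fun i => (hσpos i).le) hσle hnoise hfilter
    rw [hparseval, mul_left_comm] at hsum
    exact le_of_mul_le_mul_left hsum (by positivity)
  have hhat : τ * frob Khat ≤ σ i₀ + σ i₀ / σ i₁ * ε := by
    have hsum := mul_sqrt_sum_sq_le_of_weighted_le hτ.le (fun i => frob_nonneg _)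
      (fun i => frob_nonneg _) (hσpos i₁) (hσpos i₀).le hσge hσle (fun i => frob_nonneg _)
      hnoise hfilter (hmin K₀ hK₀ hK₀supp)
    rw [hparseval, mul_left_comm] at hsum
    exact le_of_mul_le_mul_left hsum (by positivity)
  have hratio : 1 ≤ σ i₀ / σ i₁ := (one_le_div (hσpos i₁)).mpr (hσle i₁)
  have hcast : (Fintype.card (Fin (s₁ * s₂)) : ℝ) = s₁ * s₂ := by simp
  rw [← hcast]
  refine le_sqrt_two_mul_div hτ (frob_nonneg _) (frob_nonneg _) (frob_sub_sq_le hK₀.1 hKhat.1)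
    (htrue.trans ?_) (hhat.trans ?_)
  · grw [← le_mul_of_one_le_left hε (one_le_mul_of_one_le_of_one_le hratio hcard)]
  · grw [← le_mul_of_one_le_right (by positivity) hcard]

/-- Theorem 2 (noisy recovery): any minimizer `K̂` of the regularizer over the simplex
satisfies `‖K₀ - K̂‖_F ≤ √2 (σ_max + (σ_max/σ_min) √(s₁s₂) ε) / τ`. -/
theorem recovery_noisy (m₁ m₂ s₁ s₂ : ℕ)
    (hm₁ : 0 < m₁) (hm₂ : 0 < m₂) (hs₁ : 0 < s₁) (hs₂ : 0 < s₂)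
    (L I₀ K₀ N B : Img) (hI₀ : I₀ ≠ 0)
    (hK₀ : InSimplex K₀) (hK₀supp : SuppIn m₁ m₂ K₀)
    (hB : B = conv I₀ K₀ + N)
    (ε : ℝ) (hε : 0 ≤ ε) (hN : frob (conv L N) ≤ ε)
    (κ : Fin (s₁ * s₂) → Img) (hκsupp : ∀ i, SuppIn s₁ s₂ (κ i))
    (hortho : ∀ i j, inner2 (κ i) (κ j) = if i = j then 1 else 0)
    (σ : Fin (s₁ * s₂) → ℝ) (hσ : ∀ i, σ i = frob (conv (conv L B) (κ i)))
    (hσpos : ∀ i, 0 < σ i)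
    (σmax : ℝ) (hσmax : IsGreatest (Set.range σ) σmax)
    (σmin : ℝ) (hσmin : IsLeast (Set.range σ) σmin)
    (τ : ℝ) (hτ : 0 < τ)
    (hsharp : ∀ X : Img, SuppIn (m₁ + s₁ - 1) (m₂ + s₂ - 1) X →
      τ * frob X ≤ frob (conv (conv L I₀) X))
    (Khat : Img) (hKhat : InSimplex Khat) (hKhatsupp : SuppIn m₁ m₂ Khat)
    (hmin : ∀ K : Img, InSimplex K → SuppIn m₁ m₂ K →
      ∑ i, frob (conv Khat (κ i)) ^ 2 / (σ i) ^ 2 ≤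
        ∑ i, frob (conv K (κ i)) ^ 2 / (σ i) ^ 2) :
    frob (K₀ - Khat) ≤
      Real.sqrt 2 * (σmax + (σmax / σmin) * Real.sqrt ((s₁ : ℝ) * (s₂ : ℝ)) * ε) / τ :=
  recovery_noisy_general m₁ m₂ s₁ s₂ L I₀ K₀ N B hK₀ hK₀supp hB ε hN κ hκsupp hortho σ hσ hσpos σmax
    hσmax σmin hσmin τ hτ hsharp Khat hKhat hmin
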